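/- For any x ≥ 1, x^(-1/x) Γ(1/x) ≤ Γ(x, 1/x) ≤ x^x Γ(x), with reversed inequalities if 0 < x ≤ 1. -/

import Mathlib

/-!
Since `t ≤ -log (1 - t)` on `(0, 1)`, the integrand of `Γ(x, y)` lies below
`(-log t) ^ (x - 1) * t ^ (y - 1)` when `y ≤ 1` and above it when `y ≥ 1`; the substitution
`t = exp (-s)` shows that this kernel integrates to `y ^ (-x) * Γ(x)`. For `x ≥ 1` this gives the
upper bound on `Γ(x, 1/x)` directly and the lower bound after the symmetry `Γ(x, y) = Γ(y, x)`
(reflection `t ↦ 1 - t`); the case `x ≤ 1` is the case `x ≥ 1` for `1/x`.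
-/

open Real Set intervalIntegral

noncomputable def biGamma (x y : ℝ) : ℝ :=
  ∫ t in (0:ℝ)..1, (-Real.log t) ^ (x - 1) * (-Real.log (1 - t)) ^ (y - 1)

open MeasureTheory

lemma image_exp_neg_Ioi_zero : (fun s : ℝ => exp (-s)) '' Ioi 0 = Ioo 0 1 := by
  ext t
  constructor
  · rintro ⟨s, hs, rfl⟩
    exact ⟨exp_pos _, exp_lt_one_iff.mpr (neg_lt_zero.mpr hs)⟩
  · rintro ⟨ht0, ht1⟩
    exact ⟨-log t, neg_pos.mpr (log_neg ht0 ht1), by simp [exp_log ht0]⟩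

lemma integral_neg_log_rpow_mul_rpow {a c : ℝ} (ha : 0 < a) (hc : 0 < c) :
    ∫ t in (0:ℝ)..1, (-log t) ^ (a - 1) * t ^ (c - 1) = (1 / c) ^ a * Gamma a := by
  have hderiv : ∀ s ∈ Ioi (0:ℝ), HasDerivWithinAt (fun s => exp (-s)) (-exp (-s)) (Ioi 0) s :=
    fun s _ => by simpa using ((hasDerivAt_neg s).exp).hasDerivWithinAt
  have hinj : InjOn (fun s : ℝ => exp (-s)) (Ioi 0) := (exp_injective.comp neg_injective).injOn
  rw [integral_of_le zero_le_one, integral_Ioc_eq_integral_Ioo, ← image_exp_neg_Ioi_zero,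
    integral_image_eq_integral_abs_deriv_smul measurableSet_Ioi hderiv hinj,
    ← integral_rpow_mul_exp_neg_mul_Ioi ha hc]
  refine setIntegral_congr_fun measurableSet_Ioi fun s _ => ?_
  rw [abs_neg, abs_of_pos (exp_pos _), log_exp, neg_neg, smul_eq_mul,
    rpow_def_of_pos (exp_pos _), log_exp, mul_left_comm, ← exp_add]
  ring_nf

lemma intervalIntegrable_neg_log_rpow_mul_rpow {a c : ℝ} (ha : 0 < a) (hc : 0 < c) :
    IntervalIntegrable (fun t => (-log t) ^ (a - 1) * t ^ (c - 1)) volume 0 1 :=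
  intervalIntegrable_of_integral_ne_zero <| by
    rw [integral_neg_log_rpow_mul_rpow ha hc]; positivity

lemma le_neg_log_one_sub {t : ℝ} (ht : t < 1) : t ≤ -log (1 - t) := by
  linarith [log_le_sub_one_of_pos (sub_pos.mpr ht)]

noncomputable def biGammaIntegrand (x y t : ℝ) : ℝ :=
  (-log t) ^ (x - 1) * (-log (1 - t)) ^ (y - 1)

lemma biGamma_eq_integral (x y : ℝ) : biGamma x y = ∫ t in (0:ℝ)..1, biGammaIntegrand x y t :=
  rfl

lemma biGammaIntegrand_one_sub (x y t : ℝ) :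
    biGammaIntegrand x y (1 - t) = biGammaIntegrand y x t := by
  simp only [biGammaIntegrand, sub_sub_cancel, mul_comm]

lemma biGamma_comm (x y : ℝ) : biGamma x y = biGamma y x := by
  simpa [biGamma_eq_integral, biGammaIntegrand_one_sub] using
    (integral_comp_sub_left (biGammaIntegrand x y) (a := 0) (b := 1) 1).symm

lemma IntervalIntegrable.biGammaIntegrand_swap {x y : ℝ}
    (h : IntervalIntegrable (biGammaIntegrand x y) volume 0 1) :
    IntervalIntegrable (biGammaIntegrand y x) volume 0 1 := by
  simpa [biGammaIntegrand_one_sub] using (h.comp_sub_left 1).symm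

lemma biGammaIntegrand_nonneg (x y : ℝ) {t : ℝ} (ht : t ∈ Ioo (0:ℝ) 1) :
    0 ≤ biGammaIntegrand x y t := by
  have h0 : 0 ≤ -log t := neg_nonneg.mpr (log_nonpos ht.1.le ht.2.le)
  have h1 : 0 ≤ -log (1 - t) := ht.1.le.trans (le_neg_log_one_sub ht.2)
  exact mul_nonneg (rpow_nonneg h0 _) (rpow_nonneg h1 _)

lemma biGammaIntegrand_le_of_le_one (x : ℝ) {y t : ℝ} (hy : y ≤ 1) (ht : t ∈ Ioo (0:ℝ) 1) :
    biGammaIntegrand x y t ≤ (-log t) ^ (x - 1) * t ^ (y - 1) :=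
  mul_le_mul_of_nonneg_left
    (rpow_le_rpow_of_nonpos ht.1 (le_neg_log_one_sub ht.2) (by linarith))
    (rpow_nonneg (neg_nonneg.mpr (log_nonpos ht.1.le ht.2.le)) _)

lemma le_biGammaIntegrand_of_one_le (x : ℝ) {y t : ℝ} (hy : 1 ≤ y) (ht : t ∈ Ioo (0:ℝ) 1) :
    (-log t) ^ (x - 1) * t ^ (y - 1) ≤ biGammaIntegrand x y t :=
  mul_le_mul_of_nonneg_left
    (rpow_le_rpow ht.1.le (le_neg_log_one_sub ht.2) (by linarith))
    (rpow_nonneg (neg_nonneg.mpr (log_nonpos ht.1.le ht.2.le)) _)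

lemma intervalIntegrable_biGammaIntegrand {x y : ℝ} (hx : 0 < x) (hy : 0 < y) (hy1 : y ≤ 1) :
    IntervalIntegrable (biGammaIntegrand x y) volume 0 1 := by
  refine (intervalIntegrable_neg_log_rpow_mul_rpow hx hy).mono_fun'
    (by unfold biGammaIntegrand; fun_prop) ?_
  rw [uIoc_of_le zero_le_one, ← Measure.restrict_congr_set Ioo_ae_eq_Ioc]
  exact ae_restrict_of_forall_mem measurableSet_Ioo fun t ht =>
    (norm_of_nonneg (biGammaIntegrand_nonneg x y ht)).trans_le
      (biGammaIntegrand_le_of_le_one x hy1 ht)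

lemma biGamma_le {x y : ℝ} (hx : 0 < x) (hy : 0 < y) (hy1 : y ≤ 1) :
    biGamma x y ≤ (1 / y) ^ x * Gamma x := by
  rw [biGamma_eq_integral, ← integral_neg_log_rpow_mul_rpow hx hy]
  exact integral_mono_on_of_le_Ioo zero_le_one (intervalIntegrable_biGammaIntegrand hx hy hy1)
    (intervalIntegrable_neg_log_rpow_mul_rpow hx hy) fun t ht =>
      biGammaIntegrand_le_of_le_one x hy1 ht

lemma le_biGamma {x y : ℝ} (hx : 0 < x) (hy : 1 ≤ y)
    (hint : IntervalIntegrable (biGammaIntegrand x y) volume 0 1) :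
    (1 / y) ^ x * Gamma x ≤ biGamma x y := by
  have hy0 : 0 < y := by linarith
  rw [biGamma_eq_integral, ← integral_neg_log_rpow_mul_rpow hx hy0]
  exact integral_mono_on_of_le_Ioo zero_le_one
    (intervalIntegrable_neg_log_rpow_mul_rpow hx hy0) hint fun t ht =>
      le_biGammaIntegrand_of_one_le x hy ht

lemma biGamma_one_div_mem_Icc {x : ℝ} (hx : 1 ≤ x) :
    biGamma x (1 / x) ∈ Icc ((1 / x) ^ (1 / x) * Gamma (1 / x)) (x ^ x * Gamma x) := by
  have hx0 : 0 < x := by linarith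
  have hy0 : 0 < 1 / x := by positivity
  have hy1 : 1 / x ≤ 1 := (div_le_one hx0).mpr hx
  have hint := intervalIntegrable_biGammaIntegrand hx0 hy0 hy1
  refine ⟨?_, by simpa using biGamma_le hx0 hy0 hy1⟩
  rw [biGamma_comm]
  exact le_biGamma hy0 hx hint.biGammaIntegrand_swap

theorem biGamma_inv (x : ℝ) :
    (1 ≤ x → x ^ (-(1:ℝ)/x) * Real.Gamma (1/x) ≤ biGamma x (1/x) ∧
      biGamma x (1/x) ≤ x ^ x * Real.Gamma x) ∧
    (0 < x → x ≤ 1 → biGamma x (1/x) ≤ x ^ (-(1:ℝ)/x) * Real.Gamma (1/x) ∧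
      x ^ x * Real.Gamma x ≤ biGamma x (1/x)) := by
  have hpow : ∀ {x : ℝ}, 0 < x → x ^ (-(1:ℝ)/x) = (1 / x) ^ (1 / x) := fun hx => by
    rw [neg_div, rpow_neg hx.le, one_div, inv_rpow hx.le]
  refine ⟨fun hx => hpow (by linarith) ▸ biGamma_one_div_mem_Icc hx, fun hx0 hx1 => ?_⟩
  have h := biGamma_one_div_mem_Icc (one_le_one_div hx0 hx1)
  rw [one_div_one_div, biGamma_comm] at h
  exact ⟨hpow hx0 ▸ h.2, h.1⟩
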